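/- arXiv:1610.02789 — 4 statements merged into one kernel-verified Lean document; each statement's English description precedes it below -/
import Mathlib

section
/- For s > 0 and complex λ with Re λ > 0, the Laplace transform of t ↦ (tπ)^{-1/2} e^{-s²/(4t)} equals e^{-√λ s}/√λ, where √λ denotes the principal branch of the square root. -/
/-!
Substituting `t = u²` turns the integral into `(2 / √π) ∫₀^∞ exp (-(λ u² + c² / u²)) du`
with `c = s / 2`. For real `λ = α²`, completing the square gives
`e^{-2cα} ∫₀^∞ exp (-(α u - c / u)²) du`, and the Cauchy–Schlömilch substitution
`w = α u - c / u` (after symmetrising under `u ↦ c / (α u)`) reduces this to the Gaussian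
integral `∫ exp (-w²) = √π`. Both sides are holomorphic in `λ` on `Re λ > 0`, the left one by
differentiation under the integral sign, so the identity theorem extends the formula from the
positive reals.
-/

open MeasureTheory Set Filter Topology Complex

section ChangeOfVariables

variable {E : Type*} [NormedAddCommGroup E] [NormedSpace ℝ E] {k : ℝ}

lemma image_const_div_Ioi (hk : 0 < k) : (fun u : ℝ => k / u) '' Ioi 0 = Ioi 0 := by
  refine Subset.antisymm (image_subset_iff.2 fun u hu => div_pos hk hu) fun v hv => ?_
  exact ⟨k / v, div_pos hk hv, by field_simp⟩

lemma injOn_const_div_Ioi (hk : 0 < k) : InjOn (fun u : ℝ => k / u) (Ioi 0) := by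
  intro a ha b hb hab
  have ha : a ≠ 0 := ne_of_gt ha
  have hb : b ≠ 0 := ne_of_gt hb
  field_simp at hab
  exact hab.symm

lemma hasDerivAt_const_div (k : ℝ) {u : ℝ} (hu : u ≠ 0) :
    HasDerivAt (fun u : ℝ => k / u) (-(k / u ^ 2)) u := by
  simpa [div_eq_mul_inv, neg_div, mul_neg] using (hasDerivAt_inv hu).const_mul k

lemma abs_deriv_const_div_smul (hk : 0 < k) (g : ℝ → E) :
    EqOn (fun u => |-(k / u ^ 2)| • g (k / u)) (fun u => (k / u ^ 2) • g (k / u)) (Ioi 0) :=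
  fun u hu => by simp only [abs_neg, abs_of_pos (div_pos hk (pow_pos hu 2))]

theorem integral_comp_const_div_Ioi (hk : 0 < k) (g : ℝ → E) :
    ∫ u in Ioi 0, (k / u ^ 2) • g (k / u) = ∫ u in Ioi 0, g u := by
  have := integral_image_eq_integral_abs_deriv_smul measurableSet_Ioi
    (fun u hu => (hasDerivAt_const_div k (ne_of_gt hu)).hasDerivWithinAt)
    (injOn_const_div_Ioi hk) g
  rw [image_const_div_Ioi hk] at this
  rw [this, setIntegral_congr_fun measurableSet_Ioi (abs_deriv_const_div_smul hk g)]

theorem integrableOn_comp_const_div_Ioi_iff (hk : 0 < k) {g : ℝ → E} :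
    IntegrableOn (fun u => (k / u ^ 2) • g (k / u)) (Ioi 0) ↔ IntegrableOn g (Ioi 0) := by
  have := integrableOn_image_iff_integrableOn_abs_deriv_smul measurableSet_Ioi
    (fun u hu => (hasDerivAt_const_div k (ne_of_gt hu)).hasDerivWithinAt)
    (injOn_const_div_Ioi hk) g
  rw [image_const_div_Ioi hk, integrableOn_congr_fun (abs_deriv_const_div_smul hk g)
    measurableSet_Ioi] at this
  exact this.symm

variable {α c : ℝ}

lemma hasDerivAt_mul_sub_const_div (α c : ℝ) {u : ℝ} (hu : u ≠ 0) :
    HasDerivAt (fun u : ℝ => α * u - c / u) (α + c / u ^ 2) u :=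
  (((hasDerivAt_id' u).const_mul α).sub (hasDerivAt_const_div c hu)).congr_deriv (by ring)

lemma image_mul_sub_const_div_Ioi (hα : 0 < α) (hc : 0 < c) :
    (fun u : ℝ => α * u - c / u) '' Ioi 0 = univ := by
  refine eq_univ_of_forall fun w => ?_
  -- the positive root of `α u² - w u - c = 0`
  set r := √(w ^ 2 + 4 * α * c)
  have hr : r ^ 2 = w ^ 2 + 4 * α * c := Real.sq_sqrt (by positivity)
  have hwr : 0 < w + r := by
    have : |w| < r := Real.lt_sqrt_of_sq_lt (by rw [sq_abs]; nlinarith)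
    linarith [neg_abs_le w]
  refine ⟨(w + r) / (2 * α), div_pos hwr (by positivity), ?_⟩
  field_simp
  linear_combination hr

lemma injOn_mul_sub_const_div_Ioi (hα : 0 < α) (hc : 0 < c) :
    InjOn (fun u : ℝ => α * u - c / u) (Ioi 0) :=
  (strictMonoOn_of_deriv_pos (convex_Ioi 0)
    (fun u hu => (hasDerivAt_mul_sub_const_div α c (ne_of_gt hu)).continuousAt.continuousWithinAt)
    fun u hu => by
      rw [interior_Ioi] at hu
      rw [(hasDerivAt_mul_sub_const_div α c (ne_of_gt hu)).deriv]
      positivity).injOn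

lemma abs_deriv_mul_sub_const_div_smul (hα : 0 < α) (hc : 0 < c) (f : ℝ → E) :
    EqOn (fun u => |α + c / u ^ 2| • f (α * u - c / u))
      (fun u => (α + c / u ^ 2) • f (α * u - c / u)) (Ioi 0) :=
  fun u hu => by
    have hu : (0 : ℝ) < u := hu
    simp only [abs_of_pos (by positivity : 0 < α + c / u ^ 2)]

theorem integral_eq_integral_Ioi_mul_sub_const_div (hα : 0 < α) (hc : 0 < c) (f : ℝ → E) :
    ∫ w, f w = ∫ u in Ioi 0, (α + c / u ^ 2) • f (α * u - c / u) := by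
  have := integral_image_eq_integral_abs_deriv_smul measurableSet_Ioi
    (fun u hu => (hasDerivAt_mul_sub_const_div α c (ne_of_gt hu)).hasDerivWithinAt)
    (injOn_mul_sub_const_div_Ioi hα hc) f
  rwa [image_mul_sub_const_div_Ioi hα hc, Measure.restrict_univ,
    setIntegral_congr_fun measurableSet_Ioi (abs_deriv_mul_sub_const_div_smul hα hc f)] at this

theorem integrable_iff_integrableOn_Ioi_mul_sub_const_div (hα : 0 < α) (hc : 0 < c)
    {f : ℝ → E} :
    Integrable f ↔ IntegrableOn (fun u => (α + c / u ^ 2) • f (α * u - c / u)) (Ioi 0) := by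
  have := integrableOn_image_iff_integrableOn_abs_deriv_smul measurableSet_Ioi
    (fun u hu => (hasDerivAt_mul_sub_const_div α c (ne_of_gt hu)).hasDerivWithinAt)
    (injOn_mul_sub_const_div_Ioi hα hc) f
  rwa [image_mul_sub_const_div_Ioi hα hc, integrableOn_univ,
    integrableOn_congr_fun (abs_deriv_mul_sub_const_div_smul hα hc f) measurableSet_Ioi] at this

theorem integrableOn_comp_mul_sub_const_div_Ioi {f : ℝ → E} (hf : Integrable f)
    (hα : 0 < α) (hc : 0 < c) : IntegrableOn (fun u => f (α * u - c / u)) (Ioi 0) := by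
  have hw' : ∀ u ∈ Ioi (0 : ℝ), 0 < α + c / u ^ 2 := fun u hu => by
    have : (0 : ℝ) < u := hu
    positivity
  have hint := (integrable_iff_integrableOn_Ioi_mul_sub_const_div hα hc).1 hf
  -- `f (α u - c / u)` is `(α + c / u²)⁻¹` times an integrable function, and `α + c / u² ≥ α`.
  have hmeas : AEStronglyMeasurable (fun u => f (α * u - c / u)) (volume.restrict (Ioi 0)) := by
    have hcont : ContinuousOn (fun u : ℝ => (α + c / u ^ 2)⁻¹) (Ioi 0) :=
      (continuousOn_const.add (continuousOn_const.div (continuousOn_id.pow 2)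
        fun u hu => pow_ne_zero 2 (ne_of_gt hu))).inv₀ fun u hu => ne_of_gt (hw' u hu)
    refine ((hcont.aestronglyMeasurable measurableSet_Ioi).smul
      hint.aestronglyMeasurable).congr ?_
    filter_upwards [self_mem_ae_restrict measurableSet_Ioi] with u hu
    change (α + c / u ^ 2)⁻¹ • (α + c / u ^ 2) • f (α * u - c / u) = f (α * u - c / u)
    rw [smul_smul, inv_mul_cancel₀ (ne_of_gt (hw' u hu)), one_smul]
  refine Integrable.mono' (hint.norm.const_mul α⁻¹) hmeas ?_
  filter_upwards [self_mem_ae_restrict measurableSet_Ioi] with u hu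
  have hu : (0 : ℝ) < u := hu
  calc ‖f (α * u - c / u)‖ = α⁻¹ * (α * ‖f (α * u - c / u)‖) := by field_simp
    _ ≤ α⁻¹ * ((α + c / u ^ 2) * ‖f (α * u - c / u)‖) := by
      gcongr
      exact le_add_of_nonneg_right (by positivity)
    _ = α⁻¹ * ‖(α + c / u ^ 2) • f (α * u - c / u)‖ := by
      rw [norm_smul, Real.norm_of_nonneg (by positivity)]

lemma mul_const_div_div_sub_const_div (hα : α ≠ 0) (hc : c ≠ 0) {u : ℝ} (hu : u ≠ 0) :
    α * (c / α / u) - c / (c / α / u) = -(α * u - c / u) := by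
  field_simp
  ring

/-- The Cauchy–Schlömilch transformation. -/
theorem integral_comp_mul_sub_const_div_Ioi {f : ℝ → E} (hf : Integrable f)
    (heven : ∀ w, f (-w) = f w) (hα : 0 < α) (hc : 0 < c) :
    ∫ u in Ioi 0, f (α * u - c / u) = (2 * α)⁻¹ • ∫ w, f w := by
  have hk : 0 < c / α := div_pos hc hα
  -- `u ↦ (c / α) / u` preserves `Ioi 0` and reverses the sign of `α * u - c / u`
  have hrefl : ∀ u ∈ Ioi (0 : ℝ),
      f (α * (c / α / u) - c / (c / α / u)) = f (α * u - c / u) := fun u hu => by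
    rw [mul_const_div_div_sub_const_div hα.ne' hc.ne' (ne_of_gt hu), heven]
  have hint := integrableOn_comp_mul_sub_const_div_Ioi hf hα hc
  have hsym : ∫ u in Ioi 0, (c / α / u ^ 2) • f (α * u - c / u)
      = ∫ u in Ioi 0, f (α * u - c / u) := by
    rw [← integral_comp_const_div_Ioi hk (fun u => f (α * u - c / u))]
    exact setIntegral_congr_fun measurableSet_Ioi fun u hu => by simp only [hrefl u hu]
  have hint_sym : IntegrableOn (fun u => (c / α / u ^ 2) • f (α * u - c / u)) (Ioi 0) :=
    ((integrableOn_comp_const_div_Ioi_iff hk (g := fun u => f (α * u - c / u))).2 hint).congr_fun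
      (fun u hu => by simp only [hrefl u hu]) measurableSet_Ioi
  have hsplit : EqOn (fun u => (α + c / u ^ 2) • f (α * u - c / u))
      (fun u => α • (f (α * u - c / u) + (c / α / u ^ 2) • f (α * u - c / u))) (Ioi 0) :=
    fun u _ => by
      simp only [smul_add, smul_smul, ← add_smul]
      congr 1
      field_simp
  rw [integral_eq_integral_Ioi_mul_sub_const_div hα hc, setIntegral_congr_fun measurableSet_Ioi
    hsplit, integral_smul, integral_add hint hint_sym, hsym, ← two_smul ℝ, smul_smul, smul_smul,
    show (2 * α)⁻¹ * α * 2 = 1 by field_simp, one_smul]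

lemma integral_Ioi_eq_integral_Ioi_comp_sq (g : ℝ → E) :
    ∫ t in Ioi 0, g t = ∫ u in Ioi 0, (2 * u) • g (u ^ 2) := by
  simpa [Real.rpow_two, show (2 : ℝ) - 1 = 1 by norm_num] using
    (integral_comp_rpow_Ioi_of_pos (g := g) two_pos).symm

end ChangeOfVariables

theorem eqOn_re_pos_of_eq_ofReal {f g : ℂ → ℂ} (hf : DifferentiableOn ℂ f {z | 0 < z.re})
    (hg : DifferentiableOn ℂ g {z | 0 < z.re}) (hfg : ∀ a : ℝ, 0 < a → f a = g a) :
    EqOn f g {z | 0 < z.re} := by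
  have hU : IsOpen {z : ℂ | 0 < z.re} := isOpen_lt continuous_const continuous_re
  have hreal : Tendsto ((↑) : ℝ → ℂ) (𝓝[>] 1) (𝓝[≠] 1) :=
    tendsto_nhdsWithin_iff.2 ⟨(continuous_ofReal.tendsto' 1 1 ofReal_one).mono_left
      nhdsWithin_le_nhds, eventually_nhdsWithin_of_forall fun a ha => by
        simpa using (ne_of_gt (mem_Ioi.1 ha))⟩
  refine (hf.analyticOnNhd hU).eqOn_of_preconnected_of_frequently_eq (hg.analyticOnNhd hU)
    (convex_halfSpace_re_gt 0).isPreconnected (z₀ := 1) (by simp) (hreal.frequently ?_)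
  exact (eventually_nhdsWithin_of_forall fun a ha => hfg a
    (zero_lt_one.trans (mem_Ioi.1 ha))).frequently

lemma differentiableOn_div_cpow_half_mul_cexp (c : ℝ) :
    DifferentiableOn ℂ (fun l : ℂ => √Real.pi / (2 * l ^ ((1 : ℂ) / 2)) *
      cexp (-(2 * c * l ^ ((1 : ℂ) / 2)))) {z | 0 < z.re} := by
  intro l hl
  have hslit : l ∈ slitPlane := Or.inl hl
  have hne : 2 * l ^ ((1 : ℂ) / 2) ≠ 0 :=
    mul_ne_zero two_ne_zero (by simpa [cpow_eq_zero_iff] using slitPlane_ne_zero hslit)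
  refine DifferentiableAt.differentiableWithinAt ?_
  fun_prop (disch := assumption)

lemma norm_cexp_neg_mul_sq_add_sq_div_sq (l : ℂ) (c u : ℝ) :
    ‖cexp (-(l * u ^ 2 + c ^ 2 / u ^ 2))‖ = Real.exp (-(l.re * u ^ 2 + c ^ 2 / u ^ 2)) := by
  rw [norm_exp]
  congr 1
  simp [← ofReal_pow, ← ofReal_div]

lemma norm_cexp_neg_mul_sq_add_sq_div_sq_le {l : ℂ} {δ : ℝ} (hl : δ ≤ l.re) (c u : ℝ) :
    ‖cexp (-(l * u ^ 2 + c ^ 2 / u ^ 2))‖ ≤ Real.exp (-δ * u ^ 2) := by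
  rw [norm_cexp_neg_mul_sq_add_sq_div_sq, Real.exp_le_exp]
  nlinarith [sq_nonneg u, div_nonneg (sq_nonneg c) (sq_nonneg u)]

theorem differentiableOn_integral_cexp_neg_mul_sq_add_sq_div_sq (c : ℝ) :
    DifferentiableOn ℂ
      (fun l : ℂ => ∫ u in Ioi (0 : ℝ), cexp (-(l * u ^ 2 + c ^ 2 / u ^ 2)))
      {z | 0 < z.re} := by
  intro l₀ hl₀
  set δ := l₀.re / 2 with hδ_def
  have hδ : 0 < δ := half_pos hl₀
  have hball : ∀ l ∈ Metric.ball l₀ δ, δ ≤ l.re := fun l hl => by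
    have := (abs_le.1 ((abs_re_le_norm (l - l₀)).trans (mem_ball_iff_norm.1 hl).le)).1
    simp only [sub_re] at this
    linarith [hδ_def]
  have hmeas : ∀ l : ℂ, AEStronglyMeasurable
      (fun u : ℝ => cexp (-(l * u ^ 2 + c ^ 2 / u ^ 2))) (volume.restrict (Ioi 0)) :=
    fun l => (by fun_prop : Measurable _).aestronglyMeasurable
  have hbound : IntegrableOn (fun u : ℝ => u ^ 2 * Real.exp (-δ * u ^ 2)) (Ioi 0) := by
    simpa only [Real.rpow_two] using integrableOn_rpow_mul_exp_neg_mul_sq hδ (s := 2) (by norm_num)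
  refine (hasDerivAt_integral_of_dominated_loc_of_deriv_le (Metric.ball_mem_nhds l₀ hδ)
    (Eventually.of_forall hmeas) ?_
    (F' := fun l u => -(u : ℂ) ^ 2 * cexp (-(l * u ^ 2 + c ^ 2 / u ^ 2)))
    (by fun_prop : Measurable _).aestronglyMeasurable ?_ hbound
    ?_).2.differentiableAt.differentiableWithinAt
  · exact (integrable_exp_neg_mul_sq hδ).restrict.mono' (hmeas l₀)
      (Eventually.of_forall fun u => norm_cexp_neg_mul_sq_add_sq_div_sq_le (by linarith) c u)
  · refine Eventually.of_forall fun u l hl => ?_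
    rw [norm_mul, norm_neg, norm_pow, norm_real, Real.norm_eq_abs, sq_abs]
    exact mul_le_mul_of_nonneg_left (norm_cexp_neg_mul_sq_add_sq_div_sq_le (hball l hl) c u)
      (sq_nonneg u)
  · refine Eventually.of_forall fun u l _ => ?_
    exact (((hasDerivAt_mul_const _).add_const _).fun_neg.cexp).congr_deriv (by ring)

theorem integral_exp_neg_mul_sq_add_sq_div_sq {a c : ℝ} (ha : 0 < a) (hc : 0 < c) :
    ∫ u in Ioi 0, Real.exp (-(a * u ^ 2 + c ^ 2 / u ^ 2))
      = √Real.pi / (2 * √a) * Real.exp (-(2 * c * √a)) := by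
  have hsa : 0 < √a := Real.sqrt_pos.2 ha
  have hsquare : ∀ u ∈ Ioi (0 : ℝ), Real.exp (-(a * u ^ 2 + c ^ 2 / u ^ 2))
      = Real.exp (-(2 * c * √a)) * Real.exp (-(√a * u - c / u) ^ 2) := fun u hu => by
    have : u ≠ 0 := ne_of_gt hu
    rw [← Real.exp_add]
    congr 1
    field_simp
    linear_combination u ^ 4 * Real.sq_sqrt ha.le
  have hgauss : Integrable fun w : ℝ => Real.exp (-w ^ 2) := by
    simpa using integrable_exp_neg_mul_sq one_pos
  have hI : ∫ w, Real.exp (-w ^ 2) = √Real.pi := by simpa using integral_gaussian 1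
  rw [setIntegral_congr_fun measurableSet_Ioi hsquare, integral_const_mul,
    integral_comp_mul_sub_const_div_Ioi hgauss (fun w => by rw [neg_sq]) hsa hc, hI, smul_eq_mul]
  field_simp

lemma ofReal_cpow_half {a : ℝ} (ha : 0 ≤ a) : (a : ℂ) ^ ((1 : ℂ) / 2) = √a := by
  rw [Real.sqrt_eq_rpow, ofReal_cpow ha]
  norm_num

theorem integral_cexp_neg_mul_sq_add_sq_div_sq {c : ℝ} (hc : 0 < c) {l : ℂ} (hl : 0 < l.re) :
    ∫ u in Ioi (0 : ℝ), cexp (-(l * u ^ 2 + c ^ 2 / u ^ 2))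
      = √Real.pi / (2 * l ^ ((1 : ℂ) / 2)) * cexp (-(2 * c * l ^ ((1 : ℂ) / 2))) := by
  refine eqOn_re_pos_of_eq_ofReal (differentiableOn_integral_cexp_neg_mul_sq_add_sq_div_sq c)
    (differentiableOn_div_cpow_half_mul_cexp c) (fun a ha => ?_) hl
  rw [ofReal_cpow_half ha.le]
  calc ∫ u in Ioi (0 : ℝ), cexp (-(a * u ^ 2 + c ^ 2 / u ^ 2))
      = ((∫ u in Ioi (0 : ℝ), Real.exp (-(a * u ^ 2 + c ^ 2 / u ^ 2)) : ℝ) : ℂ) := by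
        rw [← integral_complex_ofReal]
        push_cast
        rfl
    _ = _ := by
        rw [integral_exp_neg_mul_sq_add_sq_div_sq ha hc]
        push_cast
        rfl

lemma two_mul_smul_laplace_integrand_comp_sq (lam : ℂ) (s : ℝ) {u : ℝ} (hu : 0 < u) :
    (2 * u) • (cexp (-lam * ((u ^ 2 : ℝ) : ℂ)) * ((√((u ^ 2 : ℝ) * Real.pi))⁻¹ : ℝ) *
      cexp (-(s : ℂ) ^ 2 / (4 * ((u ^ 2 : ℝ) : ℂ))))
      = 2 / √Real.pi * cexp (-(lam * u ^ 2 + ((s / 2 : ℝ) : ℂ) ^ 2 / u ^ 2)) := by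
  have hπ : (√Real.pi : ℂ) ≠ 0 := ofReal_ne_zero.2 (Real.sqrt_pos.2 Real.pi_pos).ne'
  have hu' : (u : ℂ) ≠ 0 := ofReal_ne_zero.2 hu.ne'
  have hexp : cexp (-(lam * u ^ 2 + ((s / 2 : ℝ) : ℂ) ^ 2 / u ^ 2)) =
      cexp (-lam * ((u ^ 2 : ℝ) : ℂ)) * cexp (-(s : ℂ) ^ 2 / (4 * ((u ^ 2 : ℝ) : ℂ))) := by
    rw [← Complex.exp_add]
    congr 1
    push_cast
    field_simp
    ring
  rw [hexp, Real.sqrt_mul (sq_nonneg u), Real.sqrt_sq hu.le, real_smul]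
  push_cast
  field_simp

/-- Laplace transform of `t ↦ (tπ)^(-1/2) e^(-s²/(4t))` is `e^(-√λ s)/√λ`. -/
theorem laplace_gaussian_kernel (s : ℝ) (hs : 0 < s) (lam : ℂ) (hl : 0 < lam.re) :
    ∫ t in Set.Ioi (0 : ℝ),
      Complex.exp (-lam * t) * ((Real.sqrt (t * Real.pi))⁻¹ : ℝ) *
        Complex.exp (-(s : ℂ) ^ 2 / (4 * t))
      = Complex.exp (-(lam ^ ((1 : ℂ) / 2)) * s) / lam ^ ((1 : ℂ) / 2) := by
  have hπ : (√Real.pi : ℂ) ≠ 0 := ofReal_ne_zero.2 (Real.sqrt_pos.2 Real.pi_pos).ne'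
  have hsqrt : lam ^ ((1 : ℂ) / 2) ≠ 0 := by
    simpa [cpow_eq_zero_iff] using slitPlane_ne_zero (Or.inl hl : lam ∈ slitPlane)
  rw [integral_Ioi_eq_integral_Ioi_comp_sq, setIntegral_congr_fun measurableSet_Ioi
    fun u hu => two_mul_smul_laplace_integrand_comp_sq lam s hu, integral_const_mul,
    integral_cexp_neg_mul_sq_add_sq_div_sq (half_pos hs) hl]
  push_cast
  field_simp
end

section
/- Let (M_p) satisfy M_0 = 1 and logarithmic convexity, with associated function M(t) = sup_p log(t^p/M_p), t > 0. Suppose ∑_p M_{p-1}/M_p < ∞ (non-quasi-analyticity (M.3)'). Then ∫_Γ |dλ|/|λ|² over any curve Γ contained in {λ : |λ| ≥ 1} of the form Γ = {α M(l|y|) + β + iy : y ∈ ℝ} (with α, β, l > 0) is finite. -/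
/-!
The curve is `y ↦ G |y| + i y` with `G t = α M(l t) + β` monotone and `G ≥ β > 0`: condition
(M.3)' makes `t^p / M_p` summable by the ratio test, so the associated function is finite,
nonnegative and nondecreasing. Then `√(1 + g'²) / |λ|² ≤ 1 / (β² + y²) + |g'(y)| / g(y)²`, and
`G' / G²` is the derivative of the bounded monotone function `-1 / G`, hence integrable.
-/

open MeasureTheory Complex Filter Topology Set

theorem Monotone.integrable_deriv {f : ℝ → ℝ} (hf : Monotone f) {C : ℝ} (hC : ∀ x, |f x| ≤ C) :
    Integrable (deriv f) := by
  have hfin : IsFiniteMeasure hf.stieltjesFunction.measure := by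
    refine hf.stieltjesFunction.isFiniteMeasure_of_forall_abs_le (C := C) fun x => ?_
    rw [hf.stieltjesFunction_eq, abs_le]
    have hlow := hf.le_rightLim (le_refl x)
    have hup := hf.rightLim_le (lt_add_one x)
    constructor <;> linarith [(abs_le.1 (hC x)).1, (abs_le.1 (hC (x + 1))).2]
  refine (Measure.integrable_toReal_rnDeriv (μ := hf.stieltjesFunction.measure)
    (ν := volume)).congr ?_
  filter_upwards [hf.ae_hasDerivAt] with x hx using hx.deriv.symm

theorem integrable_deriv_div_sq_of_monotone {G : ℝ → ℝ} (hG : Monotone G) {c : ℝ} (hc : 0 < c)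
    (hcG : ∀ t, c ≤ G t) : Integrable fun t => deriv G t / G t ^ 2 := by
  have hGpos : ∀ t, 0 < G t := fun t => hc.trans_le (hcG t)
  have hmono : Monotone fun t => -(G t)⁻¹ := fun a b hab => by
    simpa using inv_anti₀ (hGpos a) (hG hab)
  have hbound : ∀ t, |-(G t)⁻¹| ≤ c⁻¹ := fun t => by
    rw [abs_neg, abs_of_pos (inv_pos.2 (hGpos t))]
    exact inv_anti₀ hc (hcG t)
  refine (hmono.integrable_deriv hbound).congr ?_
  filter_upwards [hG.ae_differentiableAt] with t ht
  rw [deriv.fun_neg, deriv_fun_inv'' ht (hGpos t).ne', neg_div, neg_neg]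

theorem abs_deriv_comp_abs (G : ℝ → ℝ) {y : ℝ} (hy : y ≠ 0) :
    |deriv (fun x => G |x|) y| = |deriv G (|y|)| := by
  rcases hy.lt_or_gt with hy | hy
  · have hloc : (fun x => G |x|) =ᶠ[𝓝 y] fun x => G (-x) := by
      filter_upwards [Iio_mem_nhds hy] with x hx
      rw [abs_of_neg hx]
    rw [hloc.deriv_eq, deriv_comp_neg, abs_neg, abs_of_neg hy]
  · have hloc : (fun x => G |x|) =ᶠ[𝓝 y] G := by
      filter_upwards [Ioi_mem_nhds hy] with x hx
      rw [abs_of_pos hx]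
    rw [hloc.deriv_eq, abs_of_pos hy]

theorem integrable_inv_sq_add_sq {c : ℝ} (hc : c ≠ 0) :
    Integrable fun y : ℝ => (c ^ 2 + y ^ 2)⁻¹ := by
  refine ((integrable_inv_one_add_sq.comp_div hc).const_mul (c ^ 2)⁻¹).congr
    (Eventually.of_forall fun y => ?_)
  field_simp

theorem integrable_sqrt_one_add_deriv_sq_div_of_monotone {G : ℝ → ℝ} (hG : Monotone G) {c : ℝ}
    (hc : 0 < c) (hcG : ∀ t, c ≤ G t) :
    Integrable fun y => √(1 + deriv (fun x => G |x|) y ^ 2) / (G |y| ^ 2 + y ^ 2) := by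
  set H : ℝ → ℝ := fun t => deriv G t / G t ^ 2
  have hH : Integrable H := integrable_deriv_div_sq_of_monotone hG hc hcG
  have hH_nonneg : ∀ t, 0 ≤ H t := fun t => div_nonneg hG.deriv_nonneg (sq_nonneg _)
  have hmeas : AEStronglyMeasurable
      (fun y => √(1 + deriv (fun x => G |x|) y ^ 2) / (G |y| ^ 2 + y ^ 2)) := by
    have hGabs : Measurable fun y : ℝ => G |y| := hG.measurable.comp measurable_abs
    exact (((measurable_deriv _).pow_const 2).const_add 1).sqrt.div
      ((hGabs.pow_const 2).add (measurable_id.pow_const 2)) |>.aestronglyMeasurable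
  refine (((integrable_inv_sq_add_sq hc.ne').add hH).add hH.comp_neg).mono' hmeas ?_
  filter_upwards [compl_mem_ae_iff.2 (measure_singleton (0 : ℝ))] with y hy
  set d := deriv (fun x => G |x|) y
  have hc_le : c ^ 2 + y ^ 2 ≤ G |y| ^ 2 + y ^ 2 := by
    have := hcG |y|
    gcongr
  have hsqrt : √(1 + d ^ 2) ≤ 1 + |d| :=
    Real.sqrt_le_iff.2 ⟨by positivity, by nlinarith [sq_abs d, abs_nonneg d]⟩
  have hd : |d| / (G |y| ^ 2 + y ^ 2) ≤ H |y| := by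
    rw [abs_deriv_comp_abs G hy, abs_of_nonneg hG.deriv_nonneg]
    exact div_le_div_of_nonneg_left hG.deriv_nonneg (pow_pos (hc.trans_le (hcG |y|)) 2)
      (le_add_of_nonneg_right (sq_nonneg y))
  have hH_abs : H |y| ≤ H y + H (-y) := by
    rcases abs_choice y with h | h <;> rw [h] <;> linarith [hH_nonneg y, hH_nonneg (-y)]
  rw [Real.norm_of_nonneg (div_nonneg (Real.sqrt_nonneg _) (by positivity))]
  calc √(1 + d ^ 2) / (G |y| ^ 2 + y ^ 2)
      ≤ (1 + |d|) / (G |y| ^ 2 + y ^ 2) := by gcongr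
    _ = (G |y| ^ 2 + y ^ 2)⁻¹ + |d| / (G |y| ^ 2 + y ^ 2) := by ring
    _ ≤ (c ^ 2 + y ^ 2)⁻¹ + H y + H (-y) := by
        have := inv_anti₀ (by positivity) hc_le
        linarith

section AssociatedFunction

variable {M : ℕ → ℝ}

noncomputable def associatedFunction (M : ℕ → ℝ) (t : ℝ) : ℝ := ⨆ p : ℕ, Real.log (t ^ p / M p)

theorem summable_pow_div_of_summable_div_succ (hMpos : ∀ p, 0 < M p)
    (hM : Summable fun p => M p / M (p + 1)) {s : ℝ} (hs : 0 < s) :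
    Summable fun p => s ^ p / M p := by
  refine summable_of_ratio_test_tendsto_lt_one zero_lt_one
    (Eventually.of_forall fun p => (div_pos (pow_pos hs p) (hMpos p)).ne') ?_
  have hlim : Tendsto (fun p => s * (M p / M (p + 1))) atTop (𝓝 0) := by
    simpa using hM.tendsto_atTop_zero.const_mul s
  refine hlim.congr fun p => ?_
  have := hMpos p
  have := hMpos (p + 1)
  rw [Real.norm_of_nonneg (by positivity), Real.norm_of_nonneg (by positivity)]
  field_simp
  ring

theorem bddAbove_range_log_pow_div (hMpos : ∀ p, 0 < M p)
    (hM : Summable fun p => M p / M (p + 1)) (t : ℝ) :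
    BddAbove (range fun p => Real.log (t ^ p / M p)) := by
  obtain ⟨B, hB⟩ := (summable_pow_div_of_summable_div_succ hMpos hM
    (by positivity : 0 < |t| + 1)).tendsto_atTop_zero.bddAbove_range
  refine ⟨B, forall_mem_range.2 fun p => ?_⟩
  have := hMpos p
  calc Real.log (t ^ p / M p) = Real.log |t ^ p / M p| := (Real.log_abs _).symm
    _ ≤ |t ^ p / M p| := Real.log_le_self (abs_nonneg _)
    _ = |t| ^ p / M p := by rw [abs_div, abs_pow, abs_of_pos this]
    _ ≤ (|t| + 1) ^ p / M p := by gcongr; linarith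
    _ ≤ B := hB (mem_range_self p)

theorem associatedFunction_nonneg (hMpos : ∀ p, 0 < M p)
    (hM : Summable fun p => M p / M (p + 1)) (hM0 : M 0 = 1) (t : ℝ) :
    0 ≤ associatedFunction M t := by
  simpa [associatedFunction, hM0] using le_ciSup (bddAbove_range_log_pow_div hMpos hM t) 0

theorem associatedFunction_monotoneOn (hMpos : ∀ p, 0 < M p)
    (hM : Summable fun p => M p / M (p + 1)) (hM0 : M 0 = 1) :
    MonotoneOn (associatedFunction M) (Ici 0) := by
  intro s hs t _ hst
  refine ciSup_le fun p => ?_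
  rcases (div_nonneg (pow_nonneg (mem_Ici.1 hs) p) (hMpos p).le).eq_or_lt with h | h
  · rw [← h, Real.log_zero]
    exact associatedFunction_nonneg hMpos hM hM0 t
  · refine (Real.log_le_log h ?_).trans (le_ciSup (bddAbove_range_log_pow_div hMpos hM t) p)
    exact div_le_div_of_nonneg_right (pow_le_pow_left₀ (mem_Ici.1 hs) hst p) (hMpos p).le

end AssociatedFunction

theorem arc_length_integral_finite_general (M : ℕ → ℝ) (hMpos : ∀ p, 0 < M p) (hM0 : M 0 = 1)
    (hnqa : Summable (fun p : ℕ => M p / M (p + 1)))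
    (α β l : ℝ) (hα : 0 < α) (hβ : 0 < β) (hl : 0 < l)
    (g : ℝ → ℝ)
    (hg : g = fun y : ℝ => α * (⨆ p : ℕ, Real.log ((l * |y|) ^ p / M p)) + β) :
    Integrable (fun y : ℝ =>
      Real.sqrt (1 + deriv g y ^ 2) / ‖((g y : ℂ) + Complex.I * y)‖ ^ 2) := by
  set G : ℝ → ℝ := fun t => α * associatedFunction M (l * max t 0) + β
  have hG : Monotone G := fun a b hab => by
    have hM := associatedFunction_monotoneOn hMpos hnqa hM0
      (mem_Ici.2 (by positivity)) (mem_Ici.2 (by positivity))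
      (mul_le_mul_of_nonneg_left (max_le_max_right 0 hab) hl.le)
    dsimp only [G]
    gcongr
  have hβG : ∀ t, β ≤ G t := fun t =>
    le_add_of_nonneg_left (mul_nonneg hα.le (associatedFunction_nonneg hMpos hnqa hM0 _))
  have hgG : g = fun y => G |y| := by
    rw [hg]
    funext y
    simp only [G, max_eq_left (abs_nonneg y)]
    rfl
  have hnorm : ∀ y : ℝ, ‖(g y : ℂ) + I * y‖ ^ 2 = g y ^ 2 + y ^ 2 := fun y => by
    rw [Complex.sq_norm, mul_comm, normSq_add_mul_I]
  simp_rw [hnorm, hgG]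
  exact integrable_sqrt_one_add_deriv_sq_div_of_monotone hG hβ hβG

/-- The integral `∫_Γ |dλ|/|λ|²` along the boundary
`Γ = {α M(l|y|) + β + iy : y ∈ ℝ}` of an ultra-logarithmic region contained in
`{|λ| ≥ 1}` is finite, where `M` is the associated function of a non-quasi-analytic
log-convex sequence and `|dλ| = √(1 + g'(y)²) dy` with `g(y) = α M(l|y|) + β`. -/
theorem arc_length_integral_finite (M : ℕ → ℝ) (hMpos : ∀ p, 0 < M p) (hM0 : M 0 = 1)
    (hlogconv : ∀ p : ℕ, 1 ≤ p → M p ^ 2 ≤ M (p - 1) * M (p + 1))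
    (hnqa : Summable (fun p : ℕ => M p / M (p + 1)))
    (α β l : ℝ) (hα : 0 < α) (hβ : 0 < β) (hl : 0 < l)
    (g : ℝ → ℝ)
    (hg : g = fun y : ℝ => α * (⨆ p : ℕ, Real.log ((l * |y|) ^ p / M p)) + β)
    (hΓ : ∀ y : ℝ, 1 ≤ ‖((g y : ℂ) + Complex.I * y)‖) :
    Integrable (fun y : ℝ =>
      Real.sqrt (1 + deriv g y ^ 2) / ‖((g y : ℂ) + Complex.I * y)‖ ^ 2) :=
  arc_length_integral_finite_general M hMpos hM0 hnqa α β l hα hβ hl g hg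
end

section
/- Let E be the Fréchet space of smooth functions on [0,∞) all of whose derivatives vanish at infinity, with norms ‖f‖_k = ∑_{j=0}^k sup_x |f^{(j)}(x)|. Let A f(x) = (x + ie^x) f(x) with maximal domain. If for some n ∈ ℕ and τ > 0 the family of operators S_n(t), t ∈ [0,τ), given by (S_n(t)f)(x) = [e^{t(x+ie^x)}/(x+ie^x)^n - ∑_{j=0}^{n-1} (t^j/j!) (x+ie^x)^{-(n-j)}] f(x) were to map E into E continuously for each t, a contradiction arises: for each t > 0 there exists f_t ∈ E with ‖S_n(t) f_t‖_n = +∞. Hence S_n(t) ∉ L(E) for any t > 0. -/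
open Complex Filter

/-- Membership in the Fréchet space `E` of smooth functions on `[0,∞)` all of whose
derivatives tend to `0` at `+∞` (modelled by smooth functions on `ℝ`). -/
def MemE (f : ℝ → ℂ) : Prop :=
  ContDiff ℝ (⊤ : ℕ∞) f ∧ ∀ k : ℕ, Tendsto (iteratedDeriv k f) atTop (nhds 0)

section Aux
open Polynomial


noncomputable section
namespace ISGAux

/-- step operator for exp-poly terms -/
def stp (b : ℝ) (p : ℂ[X]) : ℂ[X] := Polynomial.C (b:ℂ) * p + derivative p

/-- exponential-polynomial term -/
def T (b : ℝ) (p : ℂ[X]) : ℝ → ℂ := fun y => p.eval (y : ℂ) * Complex.exp ((b:ℂ) * y)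

lemma hasDerivAt_ofReal' (y : ℝ) : HasDerivAt (fun y : ℝ => (y:ℂ)) 1 y := by
  simpa using (hasDerivAt_id y).ofReal_comp

lemma T_hasDerivAt (b : ℝ) (p : ℂ[X]) (y : ℝ) :
    HasDerivAt (T b p) (T b (stp b p) y) y := by
  have h1 : HasDerivAt (fun y : ℝ => p.eval (y:ℂ)) (p.derivative.eval (y:ℂ)) y :=
    (p.hasDerivAt (y:ℂ)).comp_ofReal
  have h2 : HasDerivAt (fun y : ℝ => Complex.exp ((b:ℂ) * y))
      (Complex.exp ((b:ℂ)*y) * (b:ℂ)) y := by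
    exact ((hasDerivAt_ofReal' y).const_mul (b:ℂ)).cexp.congr_deriv (by ring)
  have := h1.mul h2
  convert this using 1
  rfl
  rfl
  simp [T, stp]
  ring

end ISGAux

namespace ISGAux

/-- step operator for the oscillatory term -/
def ust (a t : ℝ) (p : ℂ[X]) : ℂ[X] :=
  (Polynomial.C (a:ℂ) + Polynomial.C (Complex.I * t) * Polynomial.X) * p + Polynomial.X * derivative p

/-- oscillatory term `p(e^y) e^{ay + i t e^y}` -/
def U (a t : ℝ) (p : ℂ[X]) : ℝ → ℂ := fun y =>
  p.eval ((Real.exp y : ℝ) : ℂ) * Complex.exp ((a:ℂ) * y + Complex.I * t * (Real.exp y : ℝ))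

lemma U_hasDerivAt (a t : ℝ) (p : ℂ[X]) (y : ℝ) :
    HasDerivAt (U a t p) (U a t (ust a t p) y) y := by
  have hE : HasDerivAt (fun y : ℝ => ((Real.exp y : ℝ) : ℂ)) ((Real.exp y : ℝ) : ℂ) y := by
    exact (Real.hasDerivAt_exp y).ofReal_comp
  have h1 : HasDerivAt (fun y : ℝ => p.eval ((Real.exp y : ℝ) : ℂ))
      (p.derivative.eval ((Real.exp y : ℝ):ℂ) * ((Real.exp y : ℝ):ℂ)) y :=
    (p.hasDerivAt _).comp y hE
  have h2 : HasDerivAt (fun y : ℝ => Complex.exp ((a:ℂ) * y + Complex.I * t * (Real.exp y : ℝ)))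
      (Complex.exp ((a:ℂ) * y + Complex.I * t * (Real.exp y : ℝ)) *
        ((a:ℂ) + Complex.I * t * (Real.exp y : ℝ))) y := by
    have hin : HasDerivAt (fun y : ℝ => (a:ℂ) * y + Complex.I * t * (Real.exp y : ℝ))
        ((a:ℂ) + Complex.I * t * (Real.exp y : ℝ)) y := by
      have := ((hasDerivAt_ofReal' y).const_mul (a:ℂ)).add (hE.const_mul (Complex.I * t))
      exact this.congr_deriv (by ring)
    exact hin.cexp
  have := h1.mul h2
  convert this using 1
  rfl
  rfl
  simp [U, ust]
  ring

/-- transport of an explicit chain of derivatives to `iteratedDeriv` -/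
lemma iteratedDeriv_of_chain {g : ℝ → ℂ} {G : ℕ → ℝ → ℂ} (h0 : G 0 = g)
    (h : ∀ k y, HasDerivAt (G k) (G (k+1) y) y) : ∀ k, iteratedDeriv k g = G k := by
  intro k
  induction k with
  | zero => simpa using h0.symm
  | succ k ih =>
    rw [iteratedDeriv_succ, ih]
    funext y
    exact (h k y).deriv

end ISGAux

namespace ISGAux

lemma real_decay (i : ℕ) {b : ℝ} (hb : b < 0) :
    Tendsto (fun y : ℝ => y ^ i * Real.exp (b * y)) atTop (nhds 0) := by
  have h0 : Tendsto (fun y : ℝ => (-b) * y) atTop atTop :=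
    tendsto_id.const_mul_atTop (by linarith)
  have h := (Real.tendsto_pow_mul_exp_neg_atTop_nhds_zero i).comp h0
  have h2 := h.const_mul ((-b : ℝ) ^ i)⁻¹
  rw [mul_zero] at h2
  refine h2.congr fun y => ?_
  have hbne : (-b : ℝ) ^ i ≠ 0 := pow_ne_zero _ (by linarith)
  simp only [Function.comp_apply, mul_pow, neg_mul, neg_neg]
  field_simp
  ring

lemma tendsto_T_zero {b : ℝ} (hb : b < 0) (p : ℂ[X]) :
    Tendsto (T b p) atTop (nhds 0) := by
  have hrep : ∀ y : ℝ, T b p y =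
      ∑ i ∈ Finset.range (p.natDegree + 1), p.coeff i * (y:ℂ) ^ i * Complex.exp ((b:ℂ) * y) := by
    intro y
    rw [T, eval_eq_sum_range' (Nat.lt_succ_self _), Finset.sum_mul]
  have hsum : Tendsto (fun y : ℝ => ∑ i ∈ Finset.range (p.natDegree + 1),
      p.coeff i * (y:ℂ) ^ i * Complex.exp ((b:ℂ) * y)) atTop
      (nhds (∑ _i ∈ Finset.range (p.natDegree + 1), (0:ℂ))) := by
    refine tendsto_finset_sum _ fun i _ => ?_
    have hg : Tendsto (fun y : ℝ => ‖p.coeff i‖ * (y ^ i * Real.exp (b * y))) atTop (nhds 0) := by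
      simpa using (real_decay i hb).const_mul ‖p.coeff i‖
    refine squeeze_zero_norm' ?_ hg
    filter_upwards [eventually_ge_atTop (0:ℝ)] with y hy
    have h1 : ‖((y:ℝ):ℂ)‖ = y := by
      rw [Complex.norm_real, Real.norm_eq_abs, _root_.abs_of_nonneg hy]
    have h2 : ‖Complex.exp ((b:ℂ) * y)‖ = Real.exp (b * y) := by
      rw [Complex.norm_exp]
      norm_num
    rw [norm_mul, norm_mul, norm_pow, h1, h2]
    ring_nf
    exact le_refl _
  simpa using hsum.congr (fun y => (hrep y).symm)

end ISGAux

namespace ISGAux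

lemma tendsto_eval_div {p : ℂ[X]} {n : ℕ} (h : p.natDegree ≤ n) :
    Tendsto (fun w : ℝ => p.eval (w:ℂ) / (w:ℂ) ^ n) atTop (nhds (p.coeff n)) := by
  have key : Tendsto (fun w : ℝ => ∑ i ∈ Finset.range (n+1), p.coeff i * (w:ℂ)^i / (w:ℂ)^n)
      atTop (nhds (∑ i ∈ Finset.range (n+1), if i = n then p.coeff n else 0)) := by
    refine tendsto_finset_sum _ fun i hi => ?_
    rcases eq_or_lt_of_le (Nat.lt_succ_iff.mp (Finset.mem_range.mp hi)) with rfl | hlt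
    · simp only [if_pos rfl, if_pos trivial]
      refine tendsto_const_nhds.congr' ?_
      filter_upwards [eventually_gt_atTop (0:ℝ)] with w hw
      have hne : ((w:ℂ)) ^ i ≠ 0 := pow_ne_zero _ (by exact_mod_cast hw.ne')
      field_simp
    · simp only [if_neg hlt.ne]
      have hb : Tendsto (fun w : ℝ => ‖p.coeff i‖ * w⁻¹) atTop (nhds 0) := by
        simpa using tendsto_inv_atTop_zero.const_mul ‖p.coeff i‖
      refine squeeze_zero_norm' ?_ hb
      filter_upwards [eventually_ge_atTop (1:ℝ)] with w hw
      have hw0 : (0:ℝ) < w := lt_of_lt_of_le one_pos hw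
      have hnorm : ‖p.coeff i * (w:ℂ)^i / (w:ℂ)^n‖ = ‖p.coeff i‖ * (w^i / w^n) := by
        rw [norm_div, norm_mul, norm_pow, norm_pow, Complex.norm_real, Real.norm_eq_abs,
          _root_.abs_of_nonneg hw0.le, mul_div_assoc]
      rw [hnorm]
      have hdiv : w^i / w^n ≤ w⁻¹ := by
        have h1 : w^i / w^n = (w^(n-i))⁻¹ := by
          rw [inv_eq_one_div, div_eq_div_iff (pow_pos hw0 n).ne' (pow_pos hw0 _).ne', one_mul,
            ← pow_add]
          congr 1
          omega
        rw [h1]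
        refine inv_anti₀ hw0 ?_
        calc w = w ^ 1 := (pow_one w).symm
        _ ≤ w ^ (n - i) := pow_le_pow_right₀ hw (by omega)
      exact mul_le_mul_of_nonneg_left hdiv (norm_nonneg _)
  have key2 := key
  rw [Finset.sum_ite_eq' (Finset.range (n+1)) n (fun _ => p.coeff n)] at key2
  simp only [Finset.mem_range, Nat.lt_succ_self, if_pos] at key2
  refine key2.congr' ?_
  filter_upwards with w
  rw [eval_eq_sum_range' (Nat.lt_succ_of_le h), Finset.sum_div]

lemma tendsto_eval_norm_div {p : ℂ[X]} {n : ℕ} (h : p.natDegree ≤ n) :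
    Tendsto (fun w : ℝ => ‖p.eval (w:ℂ)‖ / w ^ n) atTop (nhds ‖p.coeff n‖) := by
  refine (tendsto_eval_div h).norm.congr' ?_
  filter_upwards [eventually_ge_atTop (0:ℝ)] with w hw
  rw [norm_div, norm_pow, Complex.norm_real, Real.norm_eq_abs, _root_.abs_of_nonneg hw]

lemma ust_iter_deg_coeff (a t : ℝ) (k : ℕ) :
    ((ust a t)^[k] 1).natDegree ≤ k ∧ ((ust a t)^[k] 1).coeff k = (Complex.I * t)^k := by
  induction k with
  | zero => simp
  | succ k ih =>
    obtain ⟨hdeg, hcoeff⟩ := ih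
    rw [Function.iterate_succ_apply']
    set p := (ust a t)^[k] 1 with hp
    have hC : (Polynomial.C (a:ℂ) + Polynomial.C (Complex.I * (t:ℂ)) * Polynomial.X).natDegree ≤ 1 := by
      refine (natDegree_add_le _ _).trans ?_
      simp only [natDegree_C, max_le_iff]
      exact ⟨Nat.zero_le _, (natDegree_C_mul_le _ _).trans natDegree_X_le⟩
    constructor
    · refine (natDegree_add_le _ _).trans (max_le ?_ ?_)
      · exact (natDegree_mul_le).trans (by omega)
      · refine (natDegree_mul_le).trans ?_
        have h1 := natDegree_derivative_le p
        have h2 : (Polynomial.X : ℂ[X]).natDegree ≤ 1 := natDegree_X_le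
        omega
    · have hrw : ust a t p = Polynomial.C (a:ℂ) * p + Polynomial.C (Complex.I * (t:ℂ)) * (Polynomial.X * p)
          + Polynomial.X * derivative p := by
        rw [ust]; ring
      rw [hrw, coeff_add, coeff_add, coeff_C_mul, coeff_C_mul, coeff_X_mul, coeff_X_mul,
        coeff_derivative, hcoeff]
      have hz : p.coeff (k+1) = 0 :=
        coeff_eq_zero_of_natDegree_lt (lt_of_le_of_lt hdeg (Nat.lt_succ_self k))
      rw [hz]
      ring

end ISGAux

namespace ISGAux

lemma expand_pow_exp (N j : ℕ) (hjN : j ≤ N) (c : ℝ) (y : ℝ) :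
    ((y:ℂ) + Complex.I * ((Real.exp y : ℝ) : ℂ))^j * Complex.exp (-(c:ℂ)*y)
    = ∑ k ∈ Finset.range (N+1), ((j.choose k : ℂ) * Complex.I^(j-k)) *
        T (((j-k : ℕ) : ℝ) - c) (Polynomial.X^k) y := by
  rw [← Finset.sum_subset (Finset.range_subset_range.2 (Nat.succ_le_succ hjN))
    (fun k _ hk => by
      have : j < k := by
        simp only [Finset.mem_range, not_lt] at hk
        omega
      simp [Nat.choose_eq_zero_of_lt this])]
  rw [add_pow, Finset.sum_mul]
  refine Finset.sum_congr rfl fun k hk => ?_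
  simp only [T, Polynomial.eval_pow, Polynomial.eval_X]
  rw [mul_pow]
  calc (y:ℂ)^k * (Complex.I^(j-k) * ((Real.exp y : ℝ):ℂ)^(j-k)) * (j.choose k : ℂ) *
        Complex.exp (-(c:ℂ)*y)
      = ((j.choose k : ℂ) * Complex.I^(j-k)) *
        ((y:ℂ)^k * (((Real.exp y : ℝ):ℂ)^(j-k) * Complex.exp (-(c:ℂ)*y))) := by ring
    _ = ((j.choose k : ℂ) * Complex.I^(j-k)) *
        ((y:ℂ)^k * Complex.exp (((((j-k:ℕ):ℝ) - c : ℝ):ℂ) * y)) := by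
      congr 2
      rw [Complex.ofReal_exp, ← Complex.exp_nat_mul, ← Complex.exp_add]
      congr 1
      push_cast
      ring

end ISGAux

namespace ISGAux

lemma iteratedDeriv_sum_T {ι : Type*} (s : Finset ι) (d : ι → ℂ) (b : ι → ℝ) (P : ι → ℂ[X])
    (k : ℕ) :
    iteratedDeriv k (fun y => ∑ i ∈ s, d i * T (b i) (P i) y)
    = fun y => ∑ i ∈ s, d i * T (b i) ((stp (b i))^[k] (P i)) y := by
  refine iteratedDeriv_of_chain (G := fun k y => ∑ i ∈ s, d i * T (b i) ((stp (b i))^[k] (P i)) y)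
    ?_ ?_ k
  · simp
  · intro k y
    refine HasDerivAt.fun_sum fun i _ => ?_
    simpa [Function.iterate_succ_apply'] using
      (T_hasDerivAt (b i) ((stp (b i))^[k] (P i)) y).const_mul (d i)

end ISGAux

open ISGAux Polynomial in
private theorem test_aux (n : ℕ) (t : ℝ) (ht : 0 < t) :
    ∃ f : ℝ → ℂ, (ContDiff ℝ (⊤ : ℕ∞) f ∧ ∀ k : ℕ, Tendsto (iteratedDeriv k f) atTop (nhds 0)) ∧
      ¬ BddAbove ((fun x : ℝ =>
        ‖iteratedDeriv n (fun y : ℝ =>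
          (Complex.exp (t * (y + Complex.I * Real.exp y)) /
              (y + Complex.I * Real.exp y) ^ n -
            ∑ j ∈ Finset.range n,
              ((t : ℂ) ^ j / (Nat.factorial j)) *
                (y + Complex.I * Real.exp y) ^ (-((n : ℤ) - j))) * f y) x‖)
        '' Set.Ici (0 : ℝ)) := by
  classical
  set c : ℝ := n + t/2 with hc
  set a : ℝ := t - c with ha
  set m : ℝ → ℂ := fun y => (y:ℂ) + Complex.I * ((Real.exp y : ℝ) : ℂ) with hmdef
  have hm : ∀ y, m y ≠ 0 := by
    intro y h
    have him : (m y).im = Real.exp y := by simp [hmdef, -Complex.ofReal_exp]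
    rw [h] at him
    exact (Real.exp_pos y).ne (by simpa using him.symm)
  refine ⟨fun y => (m y)^n * Complex.exp (-(c:ℂ)*y), ⟨?_, ?_⟩, ?_⟩
  · -- ContDiff
    have h1 : ContDiff ℝ (⊤ : ℕ∞) (fun y:ℝ => (y:ℂ)) := Complex.ofRealCLM.contDiff
    have hexp : ContDiff ℝ (⊤ : ℕ∞) (fun y:ℝ => ((Real.exp y:ℝ):ℂ)) := h1.comp Real.contDiff_exp
    exact ((h1.add (contDiff_const.mul hexp)).pow n).mul
      ((Complex.contDiff_exp (𝕜 := ℝ)).comp (contDiff_const.mul h1))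
  · -- all iterated derivatives tend to 0
    intro k
    have hfeq : (fun y => (m y)^n * Complex.exp (-(c:ℂ)*y)) =
        (fun y => ∑ k' ∈ Finset.range (n+1),
          ((n.choose k' : ℂ) * Complex.I^(n-k')) * T (((n-k':ℕ):ℝ) - c) (Polynomial.X^k') y) :=
      funext fun y => expand_pow_exp n n le_rfl c y
    rw [hfeq, iteratedDeriv_sum_T]
    have := tendsto_finset_sum (Finset.range (n+1))
      (fun k' (_ : k' ∈ Finset.range (n+1)) =>
        (tendsto_T_zero (b := ((n-k':ℕ):ℝ) - c)
          (by
            have h1 : ((n-k' : ℕ):ℝ) ≤ (n:ℝ) := by exact_mod_cast Nat.sub_le n k'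
            rw [hc]; linarith)
          ((stp (((n-k':ℕ):ℝ) - c))^[k] (Polynomial.X^k'))).const_mul
          ((n.choose k' : ℂ) * Complex.I^(n-k')))
    simpa using this
  · -- unboundedness
    set d : ℕ → ℕ → ℂ := fun j k => ((t:ℂ)^j / (Nat.factorial j : ℂ)) *
      ((j.choose k : ℂ) * Complex.I^(j-k)) with hd
    set b : ℕ → ℕ → ℝ := fun j k => ((j-k : ℕ) : ℝ) - c with hb
    have hbneg : ∀ j ∈ Finset.range n, ∀ k, b j k < 0 := by
      intro j hj k
      have h1 : ((j-k : ℕ):ℝ) ≤ (j:ℝ) := by exact_mod_cast Nat.sub_le j k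
      have h2 : (j:ℝ) < (n:ℝ) := by exact_mod_cast Finset.mem_range.mp hj
      rw [hb]; simp only; rw [hc]; linarith
    -- the pointwise identity
    have hkey : ∀ y : ℝ,
        (Complex.exp (t * ((y:ℂ) + Complex.I * Real.exp y)) /
              ((y:ℂ) + Complex.I * Real.exp y) ^ n -
            ∑ j ∈ Finset.range n,
              ((t : ℂ) ^ j / (Nat.factorial j)) *
                ((y:ℂ) + Complex.I * Real.exp y) ^ (-((n : ℤ) - j))) *
          ((m y)^n * Complex.exp (-(c:ℂ)*y))
        = U a t 1 y - ∑ j ∈ Finset.range n, ∑ k ∈ Finset.range (n+1),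
            d j k * T (b j k) (Polynomial.X^k) y := by
      intro y
      have hmy := hm y
      have hmn : (m y)^n ≠ 0 := pow_ne_zero _ hmy
      rw [sub_mul]
      congr 1
      · -- main exponential part
        have : Complex.exp (t * m y) / (m y)^n * ((m y)^n * Complex.exp (-(c:ℂ)*y))
            = Complex.exp (t * m y) * Complex.exp (-(c:ℂ)*y) := by
          field_simp
        rw [show ((y:ℂ) + Complex.I * Real.exp y) = m y from rfl, this, ← Complex.exp_add]
        simp only [U, Polynomial.eval_one, one_mul]
        congr 1
        rw [hmdef]
        simp only
        rw [ha, hc]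
        push_cast
        ring
      · -- sum part
        rw [Finset.sum_mul]
        refine Finset.sum_congr rfl fun j hj => ?_
        have hzp : (m y) ^ (-((n:ℤ) - (j:ℤ))) * (m y)^n = (m y)^j := by
          rw [← zpow_natCast (m y) n, ← zpow_natCast (m y) j, ← zpow_add₀ hmy]
          congr 1
          ring
        rw [show ((y:ℂ) + Complex.I * Real.exp y) = m y from rfl]
        calc ((t:ℂ)^j / (Nat.factorial j)) * (m y) ^ (-((n:ℤ) - (j:ℤ))) *
              ((m y)^n * Complex.exp (-(c:ℂ)*y))
            = ((t:ℂ)^j / (Nat.factorial j)) *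
              (((m y) ^ (-((n:ℤ) - (j:ℤ))) * (m y)^n) * Complex.exp (-(c:ℂ)*y)) := by ring
          _ = ((t:ℂ)^j / (Nat.factorial j)) * ((m y)^j * Complex.exp (-(c:ℂ)*y)) := by
              rw [hzp]
          _ = ∑ k ∈ Finset.range (n+1), d j k * T (b j k) (Polynomial.X^k) y := by
              rw [hmdef]
              simp only
              rw [expand_pow_exp n j (Nat.le_of_lt (Finset.mem_range.mp hj)) c y,
                Finset.mul_sum]
              refine Finset.sum_congr rfl fun k _ => ?_
              rw [hd, hb]
              ring
    -- the derivative chain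
    have hchain : iteratedDeriv n (fun y : ℝ =>
          (Complex.exp (t * ((y:ℂ) + Complex.I * Real.exp y)) /
              ((y:ℂ) + Complex.I * Real.exp y) ^ n -
            ∑ j ∈ Finset.range n,
              ((t : ℂ) ^ j / (Nat.factorial j)) *
                ((y:ℂ) + Complex.I * Real.exp y) ^ (-((n : ℤ) - j))) *
          ((m y)^n * Complex.exp (-(c:ℂ)*y)))
        = fun y => U a t ((ust a t)^[n] 1) y - ∑ j ∈ Finset.range n, ∑ k ∈ Finset.range (n+1),
            d j k * T (b j k) ((stp (b j k))^[n] (Polynomial.X^k)) y := by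
      refine iteratedDeriv_of_chain (G := fun N y => U a t ((ust a t)^[N] 1) y -
        ∑ j ∈ Finset.range n, ∑ k ∈ Finset.range (n+1),
          d j k * T (b j k) ((stp (b j k))^[N] (Polynomial.X^k)) y) ?_ ?_ n
      · funext y
        simpa using (hkey y).symm
      · intro N y
        refine HasDerivAt.sub ?_ ?_
        · simpa [Function.iterate_succ_apply'] using U_hasDerivAt a t ((ust a t)^[N] 1) y
        · refine HasDerivAt.fun_sum fun j _ => HasDerivAt.fun_sum fun k _ => ?_
          simpa [Function.iterate_succ_apply'] using
            (T_hasDerivAt (b j k) ((stp (b j k))^[N] (Polynomial.X^k)) y).const_mul (d j k)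
    -- asymptotics of the main term
    obtain ⟨hqdeg, hqcoeff⟩ := ust_iter_deg_coeff a t n
    set q : ℂ[X] := (ust a t)^[n] 1 with hq
    have hnormc : ‖q.coeff n‖ = t^n := by
      rw [hqcoeff, norm_pow, norm_mul, Complex.norm_I, one_mul, Complex.norm_real,
        Real.norm_eq_abs, _root_.abs_of_pos ht]
    have h1 : Tendsto (fun y : ℝ => ‖q.eval ((Real.exp y : ℝ):ℂ)‖ / (Real.exp y)^n) atTop
        (nhds (t^n)) := by
      have h := (tendsto_eval_norm_div hqdeg).comp Real.tendsto_exp_atTop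
      rw [hnormc] at h
      exact h
    have h2 : Tendsto (fun y : ℝ => (Real.exp y)^n * Real.exp (a*y)) atTop atTop := by
      have hpos : (0:ℝ) < (n:ℝ) + a := by rw [ha, hc]; linarith
      have hlin : Tendsto (fun y : ℝ => ((n:ℝ) + a)*y) atTop atTop :=
        tendsto_id.const_mul_atTop hpos
      refine (Real.tendsto_exp_atTop.comp hlin).congr fun y => ?_
      simp only [Function.comp_apply]
      rw [← Real.exp_nat_mul, ← Real.exp_add]
      ring_nf
    have hU : Tendsto (fun y : ℝ => ‖U a t q y‖) atTop atTop := by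
      have h := h1.pos_mul_atTop (by positivity) h2
      refine h.congr fun y => ?_
      have hE : ‖Complex.exp ((a:ℂ)*y + Complex.I*t*((Real.exp y:ℝ):ℂ))‖ = Real.exp (a*y) := by
        rw [Complex.norm_exp]
        congr 1
        simp
      have hexpow : (Real.exp y)^n ≠ 0 := pow_ne_zero _ (Real.exp_pos y).ne'
      simp only [U]
      rw [norm_mul, hE]
      field_simp
    have hv : Tendsto (fun y : ℝ => ‖∑ j ∈ Finset.range n, ∑ k ∈ Finset.range (n+1),
        d j k * T (b j k) ((stp (b j k))^[n] (Polynomial.X^k)) y‖) atTop (nhds 0) := by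
      have h : Tendsto (fun y : ℝ => ∑ j ∈ Finset.range n, ∑ k ∈ Finset.range (n+1),
          d j k * T (b j k) ((stp (b j k))^[n] (Polynomial.X^k)) y) atTop (nhds 0) := by
        have h := tendsto_finset_sum (Finset.range n) (fun j hj =>
          tendsto_finset_sum (Finset.range (n+1)) (fun k (_ : k ∈ Finset.range (n+1)) =>
            (tendsto_T_zero (hbneg j hj k) ((stp (b j k))^[n] (Polynomial.X^k))).const_mul
              (d j k)))
        simpa using h
      simpa using h.norm
    have hlow : Tendsto (fun y : ℝ => ‖iteratedDeriv n (fun y : ℝ =>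
          (Complex.exp (t * ((y:ℂ) + Complex.I * Real.exp y)) /
              ((y:ℂ) + Complex.I * Real.exp y) ^ n -
            ∑ j ∈ Finset.range n,
              ((t : ℂ) ^ j / (Nat.factorial j)) *
                ((y:ℂ) + Complex.I * Real.exp y) ^ (-((n : ℤ) - j))) *
          ((m y)^n * Complex.exp (-(c:ℂ)*y))) y‖) atTop atTop := by
      refine tendsto_atTop_mono' atTop ?_ (tendsto_atTop_add_const_right atTop (-1) hU)
      filter_upwards [hv.eventually (gt_mem_nhds (by norm_num : (0:ℝ) < 1))] with y hy
      rw [hchain]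
      calc ‖U a t q y‖ + (-1)
          ≤ ‖U a t q y‖ - ‖∑ j ∈ Finset.range n, ∑ k ∈ Finset.range (n+1),
            d j k * T (b j k) ((stp (b j k))^[n] (Polynomial.X^k)) y‖ := by linarith
        _ ≤ ‖U a t q y - ∑ j ∈ Finset.range n, ∑ k ∈ Finset.range (n+1),
            d j k * T (b j k) ((stp (b j k))^[n] (Polynomial.X^k)) y‖ := norm_sub_norm_le _ _
    rintro ⟨M, hM⟩
    obtain ⟨y, hy1, hy2⟩ := ((hlow.eventually_gt_atTop M).and (eventually_ge_atTop (0:ℝ))).exists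
    exact absurd (hM ⟨y, hy2, rfl⟩) (not_le.2 hy1)


end
end Aux

/-- The candidate `n`-times integrated semigroup of the multiplication operator
`A f(x) = (x + ie^x) f(x)` is not a family of continuous operators on `E`: for
every `n` and `t > 0` there is an `f ∈ E` whose image has `‖S_n(t)f‖_n = +∞`,
i.e. the `n`-th derivative of `S_n(t)f` is unbounded on `[0,∞)`. -/
theorem integrated_semigroup_unbounded (n : ℕ) (t : ℝ) (ht : 0 < t) :
    ∃ f : ℝ → ℂ, MemE f ∧
      ¬ BddAbove ((fun x : ℝ =>
        ‖iteratedDeriv n (fun y : ℝ =>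
          (Complex.exp (t * (y + Complex.I * Real.exp y)) /
              (y + Complex.I * Real.exp y) ^ n -
            ∑ j ∈ Finset.range n,
              ((t : ℂ) ^ j / (Nat.factorial j)) *
                (y + Complex.I * Real.exp y) ^ (-((n : ℤ) - j))) * f y) x‖)
        '' Set.Ici (0 : ℝ)) := by
  obtain ⟨f, hf, h⟩ := test_aux n t ht
  exact ⟨f, ⟨hf.1, hf.2⟩, h⟩
end

section
/- Let m(x) = x + i e^x on [0,∞) and g(x) = 1/(λ - m(x)) for λ ∈ Ω = {λ : Re λ ≥ a|Im λ|^{1/s} + b} (s > 1, a > 0, b > 1 with x - log(((x-b)/a)^s + 1) ≥ 1 for x ≥ b). Then for every n ∈ ℕ₀ and every d > 0 there is a constant C_{n,d} > 0, independent of λ, such that sup_{x ≥ 0} |g^{(n)}(x)| ≤ C_{n,d} e^{d|λ|^{1/s}} for all λ ∈ Ω. -/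
/-!
Since `g' = (1 + i e^x) g²`, induction on `n` writes `g^{(n)}` as a sum, with coefficients
independent of `λ`, of monomials `c e^{jx} g^k` with `j < k ≤ n + 1`. On `Ω` one has
`|λ - m(x)| ≥ 1` for every real `x`, and then `e^x ≤ (1 + |Im λ|) |λ - m(x)|`; hence every monomial
is at most `|c| (1 + |λ|)^n`, and a polynomial in `|λ|` is dominated by `C e^{d|λ|^{1/s}}`.
-/

open Complex Nat

noncomputable def evalMonomial (E G : ℂ) (t : ℂ × ℕ × ℕ) : ℂ := t.1 * E ^ t.2.1 * G ^ t.2.2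

/-- The derivative of `c * E ^ j * G ^ k` when `E' = E` and `G' = (1 + I * E) * G ^ 2`. -/
noncomputable def derivMonomials (t : ℂ × ℕ × ℕ) : Multiset (ℂ × ℕ × ℕ) :=
  {(t.2.1 * t.1, t.2.1, t.2.2), (t.2.2 * t.1, t.2.1, t.2.2 + 1),
    (t.2.2 * I * t.1, t.2.1 + 1, t.2.2 + 1)}

noncomputable def resolventMonomials : ℕ → Multiset (ℂ × ℕ × ℕ)
  | 0 => {(1, 0, 1)}
  | n + 1 => (resolventMonomials n).bind derivMonomials

lemma exponents_of_mem_resolventMonomials {n : ℕ} {t : ℂ × ℕ × ℕ} (ht : t ∈ resolventMonomials n) :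
    t.2.1 < t.2.2 ∧ t.2.2 ≤ n + 1 := by
  induction n generalizing t with
  | zero => simp_all [resolventMonomials]
  | succ n ih =>
    obtain ⟨u, hu, ht⟩ := Multiset.mem_bind.1 ht
    have := ih hu
    simp only [derivMonomials, Multiset.insert_eq_cons, Multiset.mem_cons,
      Multiset.mem_singleton] at ht
    rcases ht with rfl | rfl | rfl <;> dsimp only <;> omega

theorem HasDerivAt.multiset_sum_map {𝕜 F ι : Type*} [NontriviallyNormedField 𝕜]
    [NormedAddCommGroup F] [NormedSpace 𝕜 F] {s : Multiset ι} {f : ι → 𝕜 → F} {f' : ι → F}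
    {x : 𝕜} (h : ∀ i ∈ s, HasDerivAt (f i) (f' i) x) :
    HasDerivAt (fun y => (s.map (f · y)).sum) (s.map f').sum x := by
  induction s using Multiset.induction_on with
  | empty => simpa using hasDerivAt_const x (0 : F)
  | cons i s ih =>
    simp only [Multiset.map_cons, Multiset.sum_cons]
    exact (h i (Multiset.mem_cons_self i s)).add
      (ih fun j hj => h j (Multiset.mem_cons_of_mem hj))

section Expansion

variable {E G : ℝ → ℂ}

lemma hasDerivAt_evalMonomial {x : ℝ} (hE : HasDerivAt E (E x) x)
    (hG : HasDerivAt G ((1 + I * E x) * G x ^ 2) x) (t : ℂ × ℕ × ℕ) :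
    HasDerivAt (fun y => evalMonomial (E y) (G y) t)
      ((derivMonomials t).map (evalMonomial (E x) (G x))).sum x := by
  obtain ⟨c, j, k⟩ := t
  have pow_pred_mul (z : ℂ) (m : ℕ) : (m : ℂ) * z ^ (m - 1) * z = m * z ^ m := by
    cases m <;> simp [pow_succ]; ring
  have hfun : (fun y => evalMonomial (E y) (G y) (c, j, k)) =
      fun y => c * (E y ^ j * G y ^ k) := by
    funext y; simp only [evalMonomial, mul_assoc]
  rw [hfun]
  refine (((hE.fun_pow j).mul (hG.fun_pow k)).const_mul c).congr_deriv ?_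
  simp only [derivMonomials, evalMonomial, Multiset.insert_eq_cons, Multiset.map_cons,
    Multiset.map_singleton, Multiset.sum_cons, Multiset.sum_singleton]
  linear_combination (c * G x ^ k) * pow_pred_mul (E x) j
    + (c * E x ^ j * (1 + I * E x) * G x) * pow_pred_mul (G x) k

theorem iteratedDeriv_eq_sum_resolventMonomials (hE : ∀ x, HasDerivAt E (E x) x)
    (hG : ∀ x, HasDerivAt G ((1 + I * E x) * G x ^ 2) x) (n : ℕ) :
    iteratedDeriv n G = fun x => ((resolventMonomials n).map (evalMonomial (E x) (G x))).sum := by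
  induction n with
  | zero => funext x; simp [resolventMonomials, evalMonomial]
  | succ n ih =>
    funext x
    rw [iteratedDeriv_succ, ih, resolventMonomials, Multiset.map_bind, Multiset.sum_bind]
    exact (HasDerivAt.multiset_sum_map fun t _ =>
      hasDerivAt_evalMonomial (hE x) (hG x) t).deriv

end Expansion

section Bounds

variable {E G : ℂ} {M : ℝ}

lemma norm_evalMonomial_le (hG : ‖G‖ ≤ 1) (hEG : ‖E‖ * ‖G‖ ≤ M) (c : ℂ) {j k : ℕ}
    (hjk : j ≤ k) : ‖evalMonomial E G (c, j, k)‖ ≤ ‖c‖ * M ^ j := by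
  obtain ⟨m, rfl⟩ := Nat.exists_eq_add_of_le hjk
  have hGm : ‖G‖ ^ m ≤ 1 := pow_le_one₀ (norm_nonneg G) hG
  calc ‖evalMonomial E G (c, j, j + m)‖ = ‖c‖ * ((‖E‖ * ‖G‖) ^ j * ‖G‖ ^ m) := by
        simp only [evalMonomial, norm_mul, norm_pow]; ring
    _ ≤ ‖c‖ * (M ^ j * 1) := by
        have : 0 ≤ M := (by positivity : 0 ≤ ‖E‖ * ‖G‖).trans hEG
        gcongr
    _ = ‖c‖ * M ^ j := by rw [mul_one]

lemma norm_sum_resolventMonomials_le (hG : ‖G‖ ≤ 1) (hEG : ‖E‖ * ‖G‖ ≤ M) (hM : 1 ≤ M)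
    (n : ℕ) : ‖((resolventMonomials n).map (evalMonomial E G)).sum‖ ≤
      ((resolventMonomials n).map (‖·.1‖)).sum * M ^ n := by
  rw [← Multiset.sum_map_mul_right]
  refine (norm_multiset_sum_le _).trans ?_
  rw [Multiset.map_map]
  refine Multiset.sum_map_le_sum_map _ _ fun ⟨c, j, k⟩ ht => ?_
  obtain ⟨hjk, hkn⟩ : j < k ∧ k ≤ n + 1 := exponents_of_mem_resolventMonomials ht
  calc ‖evalMonomial E G (c, j, k)‖ ≤ ‖c‖ * M ^ j := norm_evalMonomial_le hG hEG c hjk.le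
    _ ≤ ‖c‖ * M ^ n := by gcongr; omega

end Bounds

lemma hasDerivAt_inv_sub_add_I_mul_exp {lam : ℂ} {x : ℝ}
    (h : lam - (x + I * Real.exp x) ≠ 0) :
    HasDerivAt (fun y : ℝ => (lam - (y + I * Real.exp y))⁻¹)
      ((1 + I * Real.exp x) * (lam - (x + I * Real.exp x))⁻¹ ^ 2) x := by
  have hm : HasDerivAt (fun y : ℝ => (y : ℂ) + I * Real.exp y) (1 + I * Real.exp x) x :=
    (hasDerivAt_id x).ofReal_comp.add ((Real.hasDerivAt_exp x).ofReal_comp.const_mul I)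
  refine ((hm.const_sub lam).fun_inv h).congr_deriv ?_
  rw [inv_pow]
  ring

lemma re_sub_add_I_mul_exp (lam : ℂ) (x : ℝ) : (lam - (x + I * Real.exp x)).re = lam.re - x := by
  simp [exp_ofReal_im]

lemma im_sub_add_I_mul_exp (lam : ℂ) (x : ℝ) :
    (lam - (x + I * Real.exp x)).im = lam.im - Real.exp x := by
  simp [exp_ofReal_re]

lemma one_le_norm_sub_add_I_mul_exp {s a b : ℝ} (hs : 0 < s) (ha : 0 < a)
    (hcond : ∀ x : ℝ, b ≤ x → 1 ≤ x - Real.log (((x - b) / a) ^ s + 1))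
    {lam : ℂ} (hlam : a * |lam.im| ^ (1 / s) + b ≤ lam.re) (x : ℝ) :
    1 ≤ ‖lam - (x + I * Real.exp x)‖ := by
  -- Either `Re (λ - m x) ≥ 1`, or `hcond` at `Re λ` pushes `e^x` above `|Im λ| + 1`.
  rcases le_or_gt x (lam.re - 1) with hx | hx
  · calc (1 : ℝ) ≤ (lam - (x + I * Real.exp x)).re := by
          rw [re_sub_add_I_mul_exp]; linarith
      _ ≤ ‖lam - (x + I * Real.exp x)‖ := re_le_norm _
  · have hre : b ≤ lam.re := (le_add_of_nonneg_left (by positivity)).trans hlam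
    have him : |lam.im| ≤ ((lam.re - b) / a) ^ s := by
      rw [← Real.rpow_inv_le_iff_of_pos (abs_nonneg _) (div_nonneg (by linarith) ha.le) hs,
        ← one_div, le_div_iff₀ ha]
      linarith
    have hexp : ((lam.re - b) / a) ^ s + 1 < Real.exp x :=
      (Real.log_lt_iff_lt_exp (by positivity)).1 (by linarith [hcond _ hre])
    calc (1 : ℝ) ≤ -(lam - (x + I * Real.exp x)).im := by
          rw [im_sub_add_I_mul_exp]; linarith [le_abs_self lam.im]
      _ ≤ ‖lam - (x + I * Real.exp x)‖ := (neg_le_abs _).trans (abs_im_le_norm _)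

lemma exp_le_mul_norm_sub_add_I_mul_exp {lam : ℂ} {x : ℝ}
    (h : 1 ≤ ‖lam - (x + I * Real.exp x)‖) :
    Real.exp x ≤ (1 + |lam.im|) * ‖lam - (x + I * Real.exp x)‖ := by
  have him := (neg_le_abs _).trans (abs_im_le_norm (lam - (x + I * Real.exp x)))
  rw [im_sub_add_I_mul_exp] at him
  nlinarith [le_abs_self lam.im, abs_nonneg lam.im]

lemma one_add_pow_le_mul_exp (k : ℕ) {d u : ℝ} (hd : 0 < d) (hu : 0 ≤ u) :
    (1 + u) ^ k ≤ k ! / d ^ k * Real.exp d * Real.exp (d * u) := by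
  have h := Real.pow_div_factorial_le_exp (x := d * (1 + u)) (by positivity) k
  rw [div_le_iff₀ (by positivity), mul_pow, mul_add, mul_one, Real.exp_add] at h
  rw [show k ! / d ^ k * Real.exp d * Real.exp (d * u)
      = Real.exp d * Real.exp (d * u) * k ! / d ^ k by ring, le_div_iff₀ (by positivity)]
  linarith

lemma one_add_le_two_mul_one_add_rpow_pow {s t : ℝ} (hs : 0 < s) (ht : 0 ≤ t) :
    1 + t ≤ 2 * (1 + t ^ (1 / s)) ^ ⌈s⌉₊ := by
  set u := t ^ (1 / s) with hu_def
  have hu : 0 ≤ u := by positivity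
  have hone : 1 ≤ (1 + u) ^ ⌈s⌉₊ := one_le_pow₀ (by linarith)
  have htu : t ≤ (1 + u) ^ ⌈s⌉₊ :=
    calc t = u ^ s := by rw [hu_def, one_div, Real.rpow_inv_rpow ht hs.ne']
      _ ≤ (1 + u) ^ s := by gcongr; linarith
      _ ≤ (1 + u) ^ (⌈s⌉₊ : ℝ) := Real.rpow_le_rpow_of_exponent_le (by linarith) (Nat.le_ceil s)
      _ = (1 + u) ^ ⌈s⌉₊ := Real.rpow_natCast _ _
  linarith

lemma exists_one_add_pow_le_mul_exp_rpow (n : ℕ) {d s : ℝ} (hd : 0 < d) (hs : 0 < s) :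
    ∃ C, 0 < C ∧ ∀ t, 0 ≤ t → (1 + t) ^ n ≤ C * Real.exp (d * t ^ (1 / s)) := by
  set N := ⌈s⌉₊ * n
  refine ⟨2 ^ n * (N ! / d ^ N * Real.exp d), by positivity, fun t ht => ?_⟩
  calc (1 + t) ^ n ≤ (2 * (1 + t ^ (1 / s)) ^ ⌈s⌉₊) ^ n := by
        gcongr; exact one_add_le_two_mul_one_add_rpow_pow hs ht
    _ = 2 ^ n * (1 + t ^ (1 / s)) ^ N := by rw [mul_pow, ← pow_mul]
    _ ≤ 2 ^ n * (N ! / d ^ N * Real.exp d * Real.exp (d * t ^ (1 / s))) := by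
        gcongr; exact one_add_pow_le_mul_exp N hd (by positivity)
    _ = _ := by ring

theorem resolvent_kernel_derivative_bound_general (s a b : ℝ) (hs : 1 < s) (ha : 0 < a)
    (hcond : ∀ x : ℝ, b ≤ x → 1 ≤ x - Real.log (((x - b) / a) ^ s + 1))
    (n : ℕ) (d : ℝ) (hd : 0 < d) :
    ∃ C : ℝ, 0 < C ∧
      ∀ lam : ℂ, a * |lam.im| ^ (1 / s) + b ≤ lam.re →
        ∀ x : ℝ, 0 ≤ x →
          ‖iteratedDeriv n
              (fun y : ℝ => (lam - (y + Complex.I * Real.exp y))⁻¹) x‖ ≤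
            C * Real.exp (d * ‖lam‖ ^ (1 / s)) := by
  obtain ⟨C, hC, hpoly⟩ := exists_one_add_pow_le_mul_exp_rpow n hd (zero_lt_one.trans hs)
  set S := ((resolventMonomials n).map (‖·.1‖)).sum
  have hS : 0 ≤ S := Multiset.sum_nonneg fun _ ht => by
    obtain ⟨t, -, rfl⟩ := Multiset.mem_map.1 ht
    exact norm_nonneg _
  refine ⟨(S + 1) * C, by positivity, fun lam hlam x _ => ?_⟩
  have hw := one_le_norm_sub_add_I_mul_exp (zero_lt_one.trans hs) ha hcond hlam
  have hw₀ : 0 < ‖lam - (x + I * Real.exp x)‖ := one_pos.trans_le (hw x)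
  rw [iteratedDeriv_eq_sum_resolventMonomials (fun y => (Real.hasDerivAt_exp y).ofReal_comp)
    (fun y => hasDerivAt_inv_sub_add_I_mul_exp (norm_pos_iff.1 (one_pos.trans_le (hw y)))) n]
  have hG : ‖(lam - (x + I * Real.exp x))⁻¹‖ ≤ 1 := by
    rw [norm_inv]; exact inv_le_one_of_one_le₀ (hw x)
  have hEG : ‖(Real.exp x : ℂ)‖ * ‖(lam - (x + I * Real.exp x))⁻¹‖ ≤ 1 + |lam.im| := by
    rw [norm_inv, norm_real, Real.norm_of_nonneg (Real.exp_pos x).le, mul_inv_le_iff₀ hw₀]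
    exact exp_le_mul_norm_sub_add_I_mul_exp (hw x)
  calc _ ≤ S * (1 + |lam.im|) ^ n :=
        norm_sum_resolventMonomials_le hG hEG (le_add_of_nonneg_right (abs_nonneg _)) n
    _ ≤ S * (1 + ‖lam‖) ^ n := by gcongr; exact abs_im_le_norm lam
    _ ≤ S * (C * Real.exp (d * ‖lam‖ ^ (1 / s))) := by gcongr; exact hpoly _ (norm_nonneg _)
    _ ≤ (S + 1) * C * Real.exp (d * ‖lam‖ ^ (1 / s)) := by
        rw [mul_assoc]; gcongr; linarith

/-- Uniform sub-exponential bound for the derivatives of the resolvent kernel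
`g(x) = (λ - (x + ie^x))^{-1}` on the region
`Ω = {λ : Re λ ≥ a|Im λ|^{1/s} + b}`: for every `n` and `d > 0` there is a
constant `C` independent of `λ ∈ Ω` with
`sup_{x ≥ 0} |g^{(n)}(x)| ≤ C e^{d|λ|^{1/s}}`. -/
theorem resolvent_kernel_derivative_bound (s a b : ℝ) (hs : 1 < s) (ha : 0 < a)
    (hb : 1 < b)
    (hcond : ∀ x : ℝ, b ≤ x → 1 ≤ x - Real.log (((x - b) / a) ^ s + 1))
    (n : ℕ) (d : ℝ) (hd : 0 < d) :
    ∃ C : ℝ, 0 < C ∧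
      ∀ lam : ℂ, a * |lam.im| ^ (1 / s) + b ≤ lam.re →
        ∀ x : ℝ, 0 ≤ x →
          ‖iteratedDeriv n
              (fun y : ℝ => (lam - (y + Complex.I * Real.exp y))⁻¹) x‖ ≤
            C * Real.exp (d * ‖lam‖ ^ (1 / s)) :=
  resolvent_kernel_derivative_bound_general s a b hs ha hcond n d hd
end
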